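/- arXiv:2410.20337 — 2 statements merged into one kernel-verified Lean document; each statement's English description precedes it below -/
import Mathlib

section
/- Let n ≥ 2 be an integer and let M ≥ 1 be a real number. Let R′ be a subset of R(n) = {(i,j) ∈ ℕ² : 1 ≤ i ≤ j ≤ n}, and let a_1, …, a_{n−1} be nonnegative real numbers such that a_i ≤ |R′ ∩ W_i| for every i ∈ {1,…,n−1}, ∑_{i=1}^{n−1} a_i² ≥ 32·M^{3/2}, and a_i² ≤ 16·M for every i. Then |R′| ≥ 4M. -/
/-- The set W_i = r_{i+1} ∪ c_i of the W-cover. -/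
def Wset (n i : ℕ) : Finset (ℕ × ℕ) :=
  (Finset.Icc 1 n ×ˢ Finset.Icc 1 n).filter
    (fun p => p.1 ≤ p.2 ∧ (p.1 = i + 1 ∨ p.2 = i))

/-- Combinatorial core of Lemma 2: the claimed lower bound |R′| ≥ 4M. -/
theorem Rcard_ge_four_M (n : ℕ) (hn : 2 ≤ n) (M : ℝ) (hM : 1 ≤ M)
    (R' : Finset (ℕ × ℕ)) (hR' : ∀ p ∈ R', 1 ≤ p.1 ∧ p.1 ≤ p.2 ∧ p.2 ≤ n)
    (a : ℕ → ℝ)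
    (ha0 : ∀ i ∈ Finset.Icc 1 (n - 1), 0 ≤ a i)
    (ha1 : ∀ i ∈ Finset.Icc 1 (n - 1), a i ≤ ((R' ∩ Wset n i).card : ℝ))
    (hsum : ∑ i ∈ Finset.Icc 1 (n - 1), a i ^ 2 ≥ 32 * M ^ ((3 : ℝ) / 2))
    (hmax : ∀ i ∈ Finset.Icc 1 (n - 1), a i ^ 2 ≤ 16 * M) :
    (R'.card : ℝ) ≥ 4 * M := by
  have hM0 : (0:ℝ) ≤ M := le_trans zero_le_one hM
  set s := Real.sqrt M with hs
  have hs1 : 1 ≤ s := by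
    rw [show (1:ℝ) = Real.sqrt 1 by simp [hs]]
    exact Real.sqrt_le_sqrt hM
  have hs0 : 0 < s := lt_of_lt_of_le one_pos hs1
  have hsq : s ^ 2 = M := Real.sq_sqrt hM0
  -- rewrite M^{3/2}
  have hM32 : M ^ ((3 : ℝ) / 2) = M * s := by
    have : ((3:ℝ)/2) = 1 + 1/2 := by norm_num
    rw [this, Real.rpow_add (lt_of_lt_of_le one_pos hM), Real.rpow_one,
      ← Real.rpow_natCast (Real.sqrt M) 2] at *
    rw [hs, Real.sqrt_eq_rpow]
  -- double counting: each point lies in at most two W_i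
  have hcardN : ∑ i ∈ Finset.Icc 1 (n-1), (R' ∩ Wset n i).card ≤ 2 * R'.card := by
    have h1 : ∀ i, (R' ∩ Wset n i).card = ∑ p ∈ R', (if p ∈ Wset n i then 1 else 0) := by
      intro i
      rw [← Finset.filter_mem_eq_inter, Finset.card_filter]
    calc ∑ i ∈ Finset.Icc 1 (n-1), (R' ∩ Wset n i).card
        = ∑ i ∈ Finset.Icc 1 (n-1), ∑ p ∈ R', (if p ∈ Wset n i then 1 else 0) := by
          simp_rw [h1]
      _ = ∑ p ∈ R', ∑ i ∈ Finset.Icc 1 (n-1), (if p ∈ Wset n i then 1 else 0) :=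
          Finset.sum_comm
      _ = ∑ p ∈ R', ((Finset.Icc 1 (n-1)).filter (fun i => p ∈ Wset n i)).card := by
          exact Finset.sum_congr rfl fun p _ => (Finset.card_filter _ _).symm
      _ ≤ ∑ p ∈ R', 2 := by
          apply Finset.sum_le_sum
          intro p _
          have hsub : (Finset.Icc 1 (n-1)).filter (fun i => p ∈ Wset n i)
              ⊆ ({p.1 - 1, p.2} : Finset ℕ) := by
            intro i hi
            simp only [Finset.mem_filter, Wset, Finset.mem_insert, Finset.mem_singleton] at hi ⊢
            rcases hi.2.2.2 with h | h
            · left; omega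
            · right; omega
          calc _ ≤ ({p.1 - 1, p.2} : Finset ℕ).card := Finset.card_le_card hsub
            _ ≤ 2 := Finset.card_insert_le _ _ |>.trans (by simp)
      _ = 2 * R'.card := by rw [Finset.sum_const, smul_eq_mul, mul_comm]
  have hcard : ∑ i ∈ Finset.Icc 1 (n-1), ((R' ∩ Wset n i).card : ℝ) ≤ 2 * R'.card := by
    exact_mod_cast hcardN
  -- each a i ≤ 4s, so a i ^ 2 ≤ 4 s * a i
  have hkey : ∀ i ∈ Finset.Icc 1 (n-1), a i ^ 2 ≤ 4 * s * a i := by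
    intro i hi
    have h1 := ha0 i hi
    have h2 := hmax i hi
    rw [← hsq] at h2
    nlinarith [sq_nonneg (a i - 4 * s)]
  have hchain : 32 * (M * s) ≤ 8 * s * R'.card := by
    calc 32 * (M * s) = 32 * M ^ ((3:ℝ)/2) := by rw [hM32]
      _ ≤ ∑ i ∈ Finset.Icc 1 (n-1), a i ^ 2 := hsum
      _ ≤ ∑ i ∈ Finset.Icc 1 (n-1), 4 * s * a i := Finset.sum_le_sum hkey
      _ ≤ ∑ i ∈ Finset.Icc 1 (n-1), 4 * s * ((R' ∩ Wset n i).card : ℝ) := by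
          apply Finset.sum_le_sum
          intro i hi
          exact mul_le_mul_of_nonneg_left (ha1 i hi) (by positivity)
      _ = 4 * s * ∑ i ∈ Finset.Icc 1 (n-1), ((R' ∩ Wset n i).card : ℝ) := by
          rw [Finset.mul_sum]
      _ ≤ 4 * s * (2 * R'.card) := mul_le_mul_of_nonneg_left hcard (by positivity)
      _ = 8 * s * R'.card := by ring
  nlinarith [hs0]
end

section
/- For every real c > 0 there exists a real C > 0 (depending only on c) with the following property. Let B ≥ 1, M ≥ 4, Γ ≥ 1 and ρ ≥ Γ be real numbers, and let f, h : ℕ → ℝ be functions such that: h(m) ≤ c·m²/B whenever m² ≤ M and h(m) ≤ c·m³/(B·√M) whenever m² > M; f(2) ≤ c·ρ/B; and f(2^{k+1}) ≤ 4·f(2^k) + 4·Γ·(h(2^{k−1}) + c/B) for every integer k ≥ 1. Then for every integer k ≥ 1, f(2^k) ≤ C·( (2^k)³·Γ/(B·√M) + (2^k)²·Γ·log₂ M / B + (2^k)²·ρ/B ). -/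
/-- Solution of the recurrence governing the I/O cost of the modified Valiant Star
Algorithm for CYK. -/
theorem cyk_star_recurrence_solution :
    ∀ c : ℝ, 0 < c → ∃ C : ℝ, 0 < C ∧
      ∀ B M Γ ρ : ℝ, 1 ≤ B → 4 ≤ M → 1 ≤ Γ → Γ ≤ ρ →
      ∀ f h : ℕ → ℝ,
        (∀ m : ℕ, (m : ℝ) ^ 2 ≤ M → h m ≤ c * (m : ℝ) ^ 2 / B) →
        (∀ m : ℕ, (m : ℝ) ^ 2 > M → h m ≤ c * (m : ℝ) ^ 3 / (B * Real.sqrt M)) →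
        f 2 ≤ c * ρ / B →
        (∀ k : ℕ, 1 ≤ k →
          f (2 ^ (k + 1)) ≤ 4 * f (2 ^ k) + 4 * Γ * (h (2 ^ (k - 1)) + c / B)) →
        ∀ k : ℕ, 1 ≤ k →
          f (2 ^ k) ≤ C * (((2 : ℝ) ^ k) ^ 3 * Γ / (B * Real.sqrt M)
            + ((2 : ℝ) ^ k) ^ 2 * Γ * Real.logb 2 M / B
            + ((2 : ℝ) ^ k) ^ 2 * ρ / B) := by
  intro c hc
  refine ⟨c, hc, ?_⟩
  intro B M Γ ρ hB hM hΓ hΓρ f h hsmall hbig hbase hrec k hk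
  set L : ℝ := Real.logb 2 M with hLdef
  set S : ℝ := Real.sqrt M with hSdef
  have hB0 : (0:ℝ) < B := by linarith
  have hM0 : (0:ℝ) < M := by linarith
  have hS2 : (2:ℝ) ≤ S := by
    have h4 : Real.sqrt 4 = 2 := by
      rw [show (4:ℝ) = 2 ^ 2 by norm_num, Real.sqrt_sq (by norm_num)]
    calc (2:ℝ) = Real.sqrt 4 := h4.symm
      _ ≤ S := Real.sqrt_le_sqrt hM
  have hS0 : (0:ℝ) < S := by linarith
  have hSsq : S ^ 2 = M := Real.sq_sqrt (le_of_lt hM0)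
  have hL2 : (2:ℝ) ≤ L := by
    have h1 : Real.logb 2 ((2:ℝ) ^ (2:ℕ)) ≤ L := by
      apply Real.logb_le_logb_of_le (by norm_num) (by positivity)
      norm_num; linarith
    rw [Real.logb_pow, Real.logb_self_eq_one (by norm_num)] at h1
    push_cast at h1
    linarith
  -- key quantities
  set e1 : ℝ := c * Γ / (B * S) with he1
  set e2 : ℝ := c * Γ / B with he2
  set e3 : ℝ := c * ρ / B with he3
  have hΓ0 : (0:ℝ) < Γ := by linarith
  have hρ0 : (0:ℝ) < ρ := by linarith
  have he1n : 0 ≤ e1 := by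
    rw [he1]
    exact div_nonneg (mul_nonneg hc.le hΓ0.le) (mul_nonneg hB0.le hS0.le)
  have he2n : 0 ≤ e2 := by
    rw [he2]; exact div_nonneg (mul_nonneg hc.le hΓ0.le) hB0.le
  have he3n : 0 ≤ e3 := by
    rw [he3]; exact div_nonneg (mul_nonneg hc.le hρ0.le) hB0.le
  have key : ∀ j : ℕ, f (2 ^ (j + 1)) ≤
      (1/4) * 8 ^ (j+1) * e1 + (1/2) * (min ((j:ℝ)+1) (L+2)) * 4 ^ (j+1) * e2
        + (1/4) * 4 ^ (j+1) * e3 := by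
    intro j
    induction j with
    | zero =>
      have hmin : min ((0:ℝ)+1) (L+2) = 1 := by
        rw [min_eq_left]; · norm_num
        · linarith
      simp only [Nat.cast_zero, hmin, pow_one]
      have h2 : f (2 ^ 1) = f 2 := by norm_num
      rw [h2]
      have hb : f 2 ≤ e3 := by rw [he3]; exact hbase
      linarith [he1n, he2n]
    | succ n ih =>
      have hrn := hrec (n+1) (by omega)
      have hsub : (n + 1) - 1 = n := by omega
      rw [hsub] at hrn
      have hcast : ((2 ^ n : ℕ) : ℝ) = (2:ℝ) ^ n := by push_cast; ring
      have hpow2 : ((2:ℝ) ^ n) ^ 2 = 4 ^ n := by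
        rw [← pow_mul, show n * 2 = 2 * n by ring, pow_mul]; norm_num
      have hpow3 : ((2:ℝ) ^ n) ^ 3 = 8 ^ n := by
        rw [← pow_mul, show n * 3 = 3 * n by ring, pow_mul]; norm_num
      have h4n1 : (1:ℝ) ≤ 4 ^ n := one_le_pow₀ (by norm_num)
      have h8pos : (0:ℝ) < 8 ^ (n+1) := by positivity
      have h4pos : (0:ℝ) < 4 ^ (n+1) := by positivity
      by_cases hcase : ((2 ^ n : ℕ) : ℝ) ^ 2 ≤ M
      · -- small case
        have hh : h (2 ^ n) ≤ c * 4 ^ n / B := by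
          have := hsmall (2 ^ n) hcase
          rwa [hcast, hpow2] at this
        have hnL : 2 * (n:ℝ) ≤ L := by
          have hle : (2:ℝ) ^ (2 * n) ≤ M := by
            rw [pow_mul]
            norm_num
            rw [hcast, hpow2] at hcase
            exact hcase
          have h1 : Real.logb 2 ((2:ℝ) ^ (2*n)) ≤ L :=
            Real.logb_le_logb_of_le (by norm_num) (by positivity) hle
          rw [Real.logb_pow, Real.logb_self_eq_one (by norm_num)] at h1
          push_cast at h1
          linarith
        have hnL' : (n:ℝ) ≤ L := by
          have : (0:ℝ) ≤ n := Nat.cast_nonneg n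
          linarith
        have hmin1 : min ((n:ℝ)+1) (L+2) = (n:ℝ)+1 := min_eq_left (by linarith)
        have hmin2 : min ((↑(n+1):ℝ)+1) (L+2) = (n:ℝ)+2 := by
          push_cast; rw [min_eq_left (by linarith)]; ring
        rw [hmin1] at ih
        rw [hmin2]
        have hcontrib : 4 * Γ * (h (2 ^ n) + c / B) ≤ 4 * ((4:ℝ)^n + 1) * e2 := by
          have hle : h (2 ^ n) + c / B ≤ c * 4 ^ n / B + c / B := by linarith
          calc 4 * Γ * (h (2 ^ n) + c / B) ≤ 4 * Γ * (c * 4 ^ n / B + c / B) := by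
                apply mul_le_mul_of_nonneg_left hle (by linarith)
            _ = 4 * ((4:ℝ)^n + 1) * e2 := by rw [he2]; field_simp
        -- term-by-term comparison
        have t1 : (4:ℝ) * ((1/4) * 8 ^ (n+1) * e1) ≤ (1/4) * 8 ^ (n+1+1) * e1 := by
          have hid : (1/4:ℝ) * 8 ^ (n+1+1) * e1 - 4 * ((1/4) * 8 ^ (n+1) * e1)
              = 8 ^ (n+1) * e1 := by ring
          linarith [mul_nonneg (le_of_lt h8pos) he1n]
        have t2 : (4:ℝ) * ((1/2) * ((n:ℝ)+1) * 4 ^ (n+1) * e2) + 4 * ((4:ℝ)^n + 1) * e2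
            ≤ (1/2) * ((n:ℝ)+2) * 4 ^ (n+1+1) * e2 := by
          have hid : (1/2:ℝ) * ((n:ℝ)+2) * 4 ^ (n+1+1) * e2
              - (4 * ((1/2) * ((n:ℝ)+1) * 4 ^ (n+1) * e2) + 4 * ((4:ℝ)^n + 1) * e2)
              = ((4:ℝ)^n * 4 - 4) * e2 := by ring
          linarith [mul_nonneg (show (0:ℝ) ≤ (4:ℝ)^n * 4 - 4 by linarith) he2n]
        have t3 : (4:ℝ) * ((1/4) * 4 ^ (n+1) * e3) = (1/4) * 4 ^ (n+1+1) * e3 := by ring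
        linarith
      · -- big case
        push_neg at hcase
        have hh : h (2 ^ n) ≤ c * 8 ^ n / (B * S) := by
          have := hbig (2 ^ n) hcase
          rwa [hcast, hpow3] at this
        have hSn : S ≤ (8:ℝ) ^ n := by
          have h2n : S < (2:ℝ) ^ n := by
            have h' := (Real.sqrt_lt' (y := ((2 ^ n : ℕ):ℝ)) (by positivity)).mpr hcase
            rw [hcast] at h'
            rw [hSdef]
            exact h'
          have h28 : (2:ℝ) ^ n ≤ 8 ^ n := pow_le_pow_left₀ (by norm_num) (by norm_num) n
          linarith
        have hBne : B ≠ 0 := ne_of_gt hB0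
        have hSne : S ≠ 0 := ne_of_gt hS0
        have hcb : Γ * (c / B) = e1 * S := by
          rw [he1]; field_simp
        have hcontrib : 4 * Γ * (h (2 ^ n) + c / B) ≤ 8 * (8:ℝ)^n * e1 := by
          have h1 : Γ * h (2 ^ n) ≤ (8:ℝ)^n * e1 := by
            calc Γ * h (2 ^ n) ≤ Γ * (c * 8 ^ n / (B * S)) := by
                  apply mul_le_mul_of_nonneg_left hh (by linarith)
              _ = (8:ℝ)^n * e1 := by rw [he1]; ring
          have h2 : Γ * (c / B) ≤ (8:ℝ)^n * e1 := by
            rw [hcb]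
            calc e1 * S ≤ e1 * 8 ^ n := mul_le_mul_of_nonneg_left hSn he1n
              _ = (8:ℝ)^n * e1 := by ring
          calc 4 * Γ * (h (2 ^ n) + c / B) = 4 * (Γ * h (2 ^ n) + Γ * (c / B)) := by ring
            _ ≤ 4 * ((8:ℝ)^n * e1 + (8:ℝ)^n * e1) := by linarith
            _ = 8 * (8:ℝ)^n * e1 := by ring
        have t1 : (4:ℝ) * ((1/4) * 8 ^ (n+1) * e1) + 8 * (8:ℝ)^n * e1
            = (1/4) * 8 ^ (n+1+1) * e1 := by ring
        have t2 : (4:ℝ) * ((1/2) * (min ((n:ℝ)+1) (L+2)) * 4 ^ (n+1) * e2)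
            ≤ (1/2) * (min ((↑(n+1):ℝ)+1) (L+2)) * 4 ^ (n+1+1) * e2 := by
          have hmono : min ((n:ℝ)+1) (L+2) ≤ min ((↑(n+1):ℝ)+1) (L+2) := by
            push_cast
            exact min_le_min (by linarith) le_rfl
          have hid : (4:ℝ) * ((1/2) * (min ((n:ℝ)+1) (L+2)) * 4 ^ (n+1) * e2)
              = (1/2) * (min ((n:ℝ)+1) (L+2)) * 4 ^ (n+1+1) * e2 := by ring
          rw [hid]
          apply mul_le_mul_of_nonneg_right _ he2n
          apply mul_le_mul_of_nonneg_right _ (by positivity)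
          apply mul_le_mul_of_nonneg_left hmono (by norm_num)
        have t3 : (4:ℝ) * ((1/4) * 4 ^ (n+1) * e3) = (1/4) * 4 ^ (n+1+1) * e3 := by ring
        linarith
  -- conclude
  obtain ⟨j, rfl⟩ : ∃ j, k = j + 1 := ⟨k - 1, by omega⟩
  have hkey := key j
  have hminL : min ((j:ℝ)+1) (L+2) ≤ L + 2 := min_le_right _ _
  have hpow2 : ((2:ℝ) ^ (j+1)) ^ 2 = 4 ^ (j+1) := by
    rw [← pow_mul, show (j+1) * 2 = 2 * (j+1) by ring, pow_mul]; norm_num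
  have hpow3 : ((2:ℝ) ^ (j+1)) ^ 3 = 8 ^ (j+1) := by
    rw [← pow_mul, show (j+1) * 3 = 3 * (j+1) by ring, pow_mul]; norm_num
  have hRHS : c * (((2:ℝ) ^ (j+1)) ^ 3 * Γ / (B * S)
      + ((2:ℝ) ^ (j+1)) ^ 2 * Γ * L / B + ((2:ℝ) ^ (j+1)) ^ 2 * ρ / B)
      = 8 ^ (j+1) * e1 + L * 4 ^ (j+1) * e2 + 4 ^ (j+1) * e3 := by
    rw [hpow2, hpow3, he1, he2, he3]; ring
  rw [hRHS]
  have h8pos : (0:ℝ) < 8 ^ (j+1) := by positivity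
  have h4pos : (0:ℝ) < 4 ^ (j+1) := by positivity
  have hmid : (1/2) * (min ((j:ℝ)+1) (L+2)) * 4 ^ (j+1) * e2 ≤ L * 4 ^ (j+1) * e2 := by
    apply mul_le_mul_of_nonneg_right _ he2n
    apply mul_le_mul_of_nonneg_right _ (le_of_lt h4pos)
    linarith
  linarith [hkey, hmid, mul_nonneg (le_of_lt h8pos) he1n, mul_nonneg (le_of_lt h4pos) he3n]
end
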